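/- arXiv:1608.03693 — 6 statements merged into one kernel-verified Lean document; each statement's English description precedes it below -/
import Mathlib

section
/- Let X be a complete separable metric space and let (P_n) be a sequence of Borel probability measures on X satisfying a large deviation principle with rate n and rate function I, i.e. I : X → [0,∞] is lower semicontinuous, for every closed set C ⊆ X one has limsup_{n→∞} (1/n) log P_n(C) ≤ −inf_{x∈C} I(x), and for every open set O ⊆ X one has liminf_{n→∞} (1/n) log P_n(O) ≥ −inf_{x∈O} I(x). Let F : X → ℝ be bounded and continuous. For Borel A ⊆ X define J_n(A) = ∫_A e^{nF(x)} P_n(dx) and the tilted probability measures P_n^F(A) = J_n(A)/J_n(X). Then (P_n^F) satisfies a large deviation principle with rate n and rate function I^F(x) = sup_{y∈X}[F(y) − I(y)] − [F(x) − I(x)]; that is, for every closed C, limsup_{n→∞} (1/n) log P_n^F(C) ≤ −inf_{x∈C} I^F(x), and for every open O, liminf_{n→∞} (1/n) log P_n^F(O) ≥ −inf_{x∈O} I^F(x). -/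
/-!
Let `J_n = expTilt P F n` be the measure `e^{nF} dP_n`, so that `P_n^F = J_n / J_n(X)`,
and write `scaledLog u n = n⁻¹ log u_n`. Varadhan's bounds
`limsup n⁻¹ log J_n(C) ≤ sup_C (F - I)` for closed `C` and
`sup_O (F - I) ≤ liminf n⁻¹ log J_n(O)` for open `O` follow from the LDP for `P_n`:
for the upper bound, cut `C` into finitely many closed slabs on which `F` varies by at most `δ`;
for the lower bound at `x ∈ O`, shrink `O` to the open set where `F > c`, for `c < F x`.
For `X` itself the two bounds meet, so `n⁻¹ log J_n(X)` converges to `sup_X (F - I)`, which is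
finite because `F` is bounded and `P_n(X) = 1`. Subtracting this limit turns Varadhan's bounds
into the LDP for `P_n^F` with rate function `I^F`.
-/

open Filter MeasureTheory Topology Set
open scoped ENNReal

namespace EReal

lemma neg_iInf {ι : Sort*} (f : ι → EReal) : -(⨅ i, f i) = ⨆ i, -f i :=
  negOrderIso.map_iInf f

lemma neg_biInf {ι : Type*} (s : Set ι) (f : ι → EReal) :
    -(⨅ i ∈ s, f i) = ⨆ i ∈ s, -f i := by
  simp only [neg_iInf]

lemma biSup_add_le {ι : Type*} (s : Set ι) (f : ι → EReal) (a : EReal) :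
    (⨆ i ∈ s, f i) + a ≤ ⨆ i ∈ s, (f i + a) :=
  add_le_of_forall_lt fun b hb c hc => by
    obtain ⟨i, hi, hbi⟩ := lt_biSup_iff.1 hb
    exact le_iSup₂_of_le i hi (add_le_add hbi.le hc.le)

lemma add_le_of_forall_coe_lt {a b L : EReal}
    (h : ∀ c : ℝ, (c : EReal) < a → c + b ≤ L) : a + b ≤ L :=
  add_le_of_forall_lt fun a' ha' b' hb' => by
    induction a' using EReal.rec with
    | bot => simp
    | coe c => exact (add_le_add_right hb'.le _).trans (h c ha')
    | top => exact absurd ha' not_top_lt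

lemma le_of_forall_pos_le_add {a b : EReal} (h : ∀ δ : ℝ, 0 < δ → a ≤ b + δ) :
    a ≤ b := by
  rw [← le_of_forall_lt_iff_le]
  intro z hz
  induction b using EReal.rec with
  | bot => exact (h 1 one_pos).trans (by simp)
  | coe t =>
    have := h (z - t) (_root_.sub_pos.2 (EReal.coe_lt_coe_iff.1 hz))
    rwa [← coe_add, add_sub_cancel] at this
  | top => exact absurd hz not_top_lt

lemma limsup_add_le_of_tendsto {α : Type*} {f : Filter α} [f.NeBot] {u v : α → EReal} {c : ℝ}
    (hv : Tendsto v f (𝓝 c)) : limsup (u + v) f ≤ limsup u f + c := by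
  rw [← hv.limsup_eq]
  exact limsup_add_le (.inr (hv.limsup_eq ▸ coe_ne_top c))
    (.inr (hv.limsup_eq ▸ coe_ne_bot c))

lemma le_liminf_add_of_tendsto {α : Type*} {f : Filter α} [f.NeBot] {u v : α → EReal} {c : ℝ}
    (hv : Tendsto v f (𝓝 c)) : liminf u f + c ≤ liminf (u + v) f :=
  hv.liminf_eq ▸ le_liminf_add

end EReal

noncomputable def scaledLog (u : ℕ → ℝ≥0∞) (n : ℕ) : EReal :=
  ((n : ℝ)⁻¹ : ℝ) * ENNReal.log (u n)

lemma scaledLog_mono {u v : ℕ → ℝ≥0∞} {n : ℕ} (h : u n ≤ v n) :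
    scaledLog u n ≤ scaledLog v n :=
  mul_le_mul_of_nonneg_left (ENNReal.log_monotone h) (EReal.coe_nonneg.2 (by positivity))

lemma scaledLog_max (u v : ℕ → ℝ≥0∞) (n : ℕ) :
    scaledLog (fun n => max (u n) (v n)) n = max (scaledLog u n) (scaledLog v n) := by
  rw [scaledLog, ENNReal.log_monotone.map_max]
  exact Monotone.map_max fun _ _ h =>
    mul_le_mul_of_nonneg_left h (EReal.coe_nonneg.2 (by positivity))

lemma scaledLog_mul (u v : ℕ → ℝ≥0∞) (n : ℕ) :
    scaledLog (u * v) n = scaledLog u n + scaledLog v n := by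
  simp only [scaledLog, Pi.mul_apply, ENNReal.log_mul_add]
  exact EReal.left_distrib_of_nonneg_of_ne_top (EReal.coe_nonneg.2 (by positivity))
    (EReal.coe_ne_top _) _ _

lemma scaledLog_exp_mul (c : ℝ) {n : ℕ} (hn : n ≠ 0) :
    scaledLog (fun n => ENNReal.ofReal (Real.exp (n * c))) n = c := by
  rw [scaledLog, ENNReal.log_ofReal_of_pos (Real.exp_pos _), Real.log_exp, ← EReal.coe_mul,
    inv_mul_cancel_left₀ (Nat.cast_ne_zero.2 hn)]

lemma scaledLog_inv {u : ℕ → ℝ≥0∞} {n : ℕ} : scaledLog u⁻¹ n = -scaledLog u n := by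
  simp only [scaledLog, Pi.inv_apply, ENNReal.log_inv, mul_neg]

lemma tendsto_scaledLog_const {a : ℝ≥0∞} (h0 : a ≠ 0) (htop : a ≠ ⊤) :
    Tendsto (scaledLog fun _ => a) atTop (𝓝 0) := by
  have := (tendsto_inv_atTop_nhds_zero_nat (𝕜 := ℝ)).mul_const (Real.log a.toReal)
  rw [zero_mul] at this
  refine (EReal.tendsto_coe.2 this).congr fun n => ?_
  simp [scaledLog, ENNReal.log_pos_real h0 htop, EReal.coe_mul]

lemma limsup_scaledLog_add_le (u v : ℕ → ℝ≥0∞) :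
    limsup (scaledLog (u + v)) atTop ≤
      max (limsup (scaledLog u) atTop) (limsup (scaledLog v) atTop) := by
  have hmax (n : ℕ) : scaledLog (u + v) n ≤
      (fun n => max (scaledLog u n) (scaledLog v n)) n + scaledLog (fun _ => 2) n :=
    calc scaledLog (u + v) n ≤ scaledLog ((fun _ => 2) * fun n => max (u n) (v n)) n :=
          scaledLog_mono (by simpa [two_mul] using add_le_add (le_max_left _ _) (le_max_right _ _))
      _ = _ := by rw [scaledLog_mul, add_comm, scaledLog_max]
  have htwo : Tendsto (scaledLog fun _ => 2) atTop (𝓝 ((0 : ℝ) : EReal)) := by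
    simpa using tendsto_scaledLog_const two_ne_zero ENNReal.ofNat_ne_top
  calc limsup (scaledLog (u + v)) atTop
      ≤ limsup ((fun n => max (scaledLog u n) (scaledLog v n)) + scaledLog fun _ => 2) atTop :=
        limsup_le_limsup (.of_forall hmax)
    _ ≤ limsup (fun n => max (scaledLog u n) (scaledLog v n)) atTop + (0 : ℝ) :=
        EReal.limsup_add_le_of_tendsto htwo
    _ = _ := by rw [EReal.coe_zero, add_zero, limsup_max]

lemma limsup_scaledLog_sum_le {ι : Type*} (s : Finset ι) (u : ι → ℕ → ℝ≥0∞) :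
    limsup (scaledLog fun n => ∑ i ∈ s, u i n) atTop ≤
      ⨆ i ∈ s, limsup (scaledLog (u i)) atTop := by
  classical
  induction s using Finset.induction_on with
  | empty =>
    refine (limsup_le_of_le (by isBoundedDefault) ?_).trans bot_le
    filter_upwards [eventually_gt_atTop 0] with n hn
    simp [scaledLog, EReal.coe_mul_bot_of_pos (inv_pos.2 (Nat.cast_pos.2 hn))]
  | insert a s ha ih =>
    simp only [Finset.sum_insert ha, Finset.mem_insert, iSup_or, iSup_sup_eq, iSup_iSup_eq_left]
    exact (limsup_scaledLog_add_le (u a) _).trans (max_le_max le_rfl ih)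

lemma tendsto_scaledLog_inv {u : ℕ → ℝ≥0∞} {s : ℝ}
    (hu : Tendsto (scaledLog u) atTop (𝓝 s)) :
    Tendsto (scaledLog u⁻¹) atTop (𝓝 (-s : ℝ)) := by
  simpa only [funext fun n => scaledLog_inv (u := u) (n := n), EReal.coe_neg] using hu.neg

lemma limsup_scaledLog_inv_mul_le {u : ℕ → ℝ≥0∞} {s : ℝ}
    (hu : Tendsto (scaledLog u) atTop (𝓝 s)) (v : ℕ → ℝ≥0∞) :
    limsup (scaledLog (u⁻¹ * v)) atTop ≤ limsup (scaledLog v) atTop + (-s : ℝ) := by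
  rw [mul_comm, show scaledLog (v * u⁻¹) = scaledLog v + scaledLog u⁻¹ from
    funext (scaledLog_mul v u⁻¹)]
  exact EReal.limsup_add_le_of_tendsto (tendsto_scaledLog_inv hu)

lemma le_liminf_scaledLog_inv_mul {u : ℕ → ℝ≥0∞} {s : ℝ}
    (hu : Tendsto (scaledLog u) atTop (𝓝 s)) (v : ℕ → ℝ≥0∞) :
    liminf (scaledLog v) atTop + (-s : ℝ) ≤ liminf (scaledLog (u⁻¹ * v)) atTop := by
  rw [mul_comm, show scaledLog (v * u⁻¹) = scaledLog v + scaledLog u⁻¹ from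
    funext (scaledLog_mul v u⁻¹)]
  exact EReal.le_liminf_add_of_tendsto (tendsto_scaledLog_inv hu)

section Tilt

variable {X : Type*} [MeasurableSpace X]

noncomputable def expTilt (P : ℕ → Measure X) (F : X → ℝ) (n : ℕ) : Measure X :=
  (P n).withDensity fun x => ENNReal.ofReal (Real.exp (n * F x))

lemma expTilt_apply_le {P : ℕ → Measure X} {F : X → ℝ} {A : Set X} {c : ℝ} (n : ℕ)
    (hA : MeasurableSet A) (hc : ∀ x ∈ A, F x ≤ c) :
    expTilt P F n A ≤ ENNReal.ofReal (Real.exp (n * c)) * P n A := by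
  rw [expTilt, withDensity_apply _ hA, ← setLIntegral_const]
  exact setLIntegral_mono measurable_const fun x hx =>
    ENNReal.ofReal_le_ofReal (Real.exp_le_exp.2 (by gcongr; exact hc x hx))

lemma le_expTilt_apply {P : ℕ → Measure X} {F : X → ℝ} {A : Set X} {c : ℝ} (n : ℕ)
    (hF : Measurable F) (hc : ∀ x ∈ A, c ≤ F x) :
    ENNReal.ofReal (Real.exp (n * c)) * P n A ≤ expTilt P F n A := by
  rw [← setLIntegral_const]
  refine (setLIntegral_mono (by fun_prop) fun x hx =>
    ENNReal.ofReal_le_ofReal (Real.exp_le_exp.2 ?_)).trans (withDensity_apply_le _ A)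
  gcongr
  exact hc x hx

lemma limsup_scaledLog_expTilt_le {P : ℕ → Measure X} {F : X → ℝ} {A : Set X} {c : ℝ}
    (hA : MeasurableSet A) (hc : ∀ x ∈ A, F x ≤ c) :
    limsup (scaledLog fun n => expTilt P F n A) atTop ≤
      limsup (scaledLog fun n => P n A) atTop + c := by
  refine (limsup_le_limsup (eventually_ne_atTop 0 |>.mono fun n hn => ?_)).trans
    (EReal.limsup_add_le_of_tendsto (tendsto_const_nhds (x := (c : EReal))))
  calc scaledLog (fun n => expTilt P F n A) n
      ≤ scaledLog ((fun n : ℕ => ENNReal.ofReal (Real.exp (n * c))) * fun n => P n A) n :=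
        scaledLog_mono (expTilt_apply_le n hA hc)
    _ = scaledLog (fun n => P n A) n + c := by
        rw [scaledLog_mul, scaledLog_exp_mul c hn, add_comm]

lemma le_liminf_scaledLog_expTilt {P : ℕ → Measure X} {F : X → ℝ} {A : Set X} {c : ℝ}
    (hF : Measurable F) (hc : ∀ x ∈ A, c ≤ F x) :
    liminf (scaledLog fun n => P n A) atTop + c ≤
      liminf (scaledLog fun n => expTilt P F n A) atTop := by
  refine (EReal.le_liminf_add_of_tendsto (tendsto_const_nhds (x := (c : EReal)))).trans
    (liminf_le_liminf (eventually_ne_atTop 0 |>.mono fun n hn => ?_))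
  calc scaledLog (fun n => P n A) n + c
      = scaledLog ((fun n : ℕ => ENNReal.ofReal (Real.exp (n * c))) * fun n => P n A) n := by
        rw [scaledLog_mul, scaledLog_exp_mul c hn, add_comm]
    _ ≤ scaledLog (fun n => expTilt P F n A) n := scaledLog_mono (le_expTilt_apply n hF hc)

end Tilt

lemma neg_biInf_add_le_biSup_sub_add {X : Type*} {I : X → EReal} {F : X → ℝ} {A : Set X}
    {c δ : ℝ} (hc : ∀ x ∈ A, c ≤ F x + δ) :
    -(⨅ x ∈ A, I x) + c ≤ (⨆ x ∈ A, ((F x : EReal) - I x)) + δ := by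
  rw [EReal.neg_biInf]
  refine (EReal.biSup_add_le A _ _).trans (iSup₂_le fun x hx => ?_)
  calc -I x + c ≤ -I x + (F x + δ : ℝ) := by gcongr; exact hc x hx
    _ = ((F x : EReal) - I x) + δ := by rw [EReal.coe_add, sub_eq_add_neg]; ac_rfl
    _ ≤ _ := by gcongr; exact le_iSup₂ (f := fun x _ => (F x : EReal) - I x) x hx

section LDP

variable {X : Type*} [TopologicalSpace X] [MeasurableSpace X]

def LDPUpperBound (P : ℕ → Measure X) (I : X → EReal) : Prop :=
  ∀ C : Set X, IsClosed C → limsup (scaledLog fun n => P n C) atTop ≤ -(⨅ x ∈ C, I x)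

def LDPLowerBound (P : ℕ → Measure X) (I : X → EReal) : Prop :=
  ∀ O : Set X, IsOpen O → -(⨅ x ∈ O, I x) ≤ liminf (scaledLog fun n => P n O) atTop

variable [OpensMeasurableSpace X] {P : ℕ → Measure X} {I : X → EReal} {F : X → ℝ}

theorem limsup_scaledLog_expTilt_le_biSup (hupper : LDPUpperBound P I) (hF : Continuous F)
    {M : ℝ} (hM : ∀ x, |F x| ≤ M) {C : Set X} (hC : IsClosed C) :
    limsup (scaledLog fun n => expTilt P F n C) atTop ≤ ⨆ x ∈ C, ((F x : EReal) - I x) := by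
  refine EReal.le_of_forall_pos_le_add fun δ hδ => ?_
  let slab (j : ℤ) : Set X := C ∩ F ⁻¹' Icc (j * δ) ((j + 1) * δ)
  have hslab_closed (j : ℤ) : IsClosed (slab j) := hC.inter (isClosed_Icc.preimage hF)
  have hcover : C ⊆ ⋃ j ∈ Finset.Icc ⌊-M / δ⌋ ⌊M / δ⌋, slab j := by
    intro x hx
    have hFx := abs_le.1 (hM x)
    refine mem_biUnion (x := ⌊F x / δ⌋) (Finset.mem_Icc.2 ⟨?_, ?_⟩) ⟨hx, ?_, ?_⟩
    · exact Int.floor_mono (by gcongr; exact hFx.1)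
    · exact Int.floor_mono (by gcongr; exact hFx.2)
    · exact (le_div_iff₀ hδ).1 (Int.floor_le _)
    · exact ((div_lt_iff₀ hδ).1 (Int.lt_floor_add_one _)).le
  have hslab (j : ℤ) : limsup (scaledLog fun n => expTilt P F n (slab j)) atTop ≤
      (⨆ x ∈ C, ((F x : EReal) - I x)) + δ :=
    calc _ ≤ limsup (scaledLog fun n => P n (slab j)) atTop + ((j + 1) * δ : ℝ) :=
          limsup_scaledLog_expTilt_le (hslab_closed j).measurableSet fun x hx => hx.2.2
      _ ≤ -(⨅ x ∈ slab j, I x) + ((j + 1) * δ : ℝ) := by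
          gcongr; exact hupper _ (hslab_closed j)
      _ ≤ (⨆ x ∈ slab j, ((F x : EReal) - I x)) + δ :=
          neg_biInf_add_le_biSup_sub_add fun x hx => by linarith [hx.2.1]
      _ ≤ _ := add_le_add (biSup_mono fun x (hx : x ∈ slab j) => hx.1) le_rfl
  calc limsup (scaledLog fun n => expTilt P F n C) atTop
      ≤ limsup (scaledLog fun n =>
          ∑ j ∈ Finset.Icc ⌊-M / δ⌋ ⌊M / δ⌋, expTilt P F n (slab j)) atTop :=
        limsup_le_limsup (.of_forall fun n => scaledLog_mono
          ((measure_mono hcover).trans (measure_biUnion_finset_le _ _)))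
    _ ≤ _ := (limsup_scaledLog_sum_le _ _).trans (iSup₂_le fun j _ => hslab j)

theorem biSup_le_liminf_scaledLog_expTilt (hlower : LDPLowerBound P I) (hF : Continuous F)
    {O : Set X} (hO : IsOpen O) :
    ⨆ x ∈ O, ((F x : EReal) - I x) ≤ liminf (scaledLog fun n => expTilt P F n O) atTop := by
  refine iSup₂_le fun x hx => ?_
  rw [sub_eq_add_neg]
  refine EReal.add_le_of_forall_coe_lt fun c hc => ?_
  let U := O ∩ F ⁻¹' Ioi c
  have hU : IsOpen U := hO.inter (isOpen_Ioi.preimage hF)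
  have hxU : x ∈ U := ⟨hx, EReal.coe_lt_coe_iff.1 hc⟩
  calc (c : EReal) + -I x ≤ -(⨅ y ∈ U, I y) + c := by
        rw [add_comm]
        gcongr
        exact EReal.neg_le_neg_iff.2 (iInf₂_le (f := fun y _ => I y) x hxU)
    _ ≤ liminf (scaledLog fun n => P n U) atTop + c := by gcongr; exact hlower U hU
    _ ≤ liminf (scaledLog fun n => expTilt P F n U) atTop :=
        le_liminf_scaledLog_expTilt hF.measurable fun y hy => le_of_lt hy.2
    _ ≤ _ := liminf_le_liminf
        (.of_forall fun n => scaledLog_mono (measure_mono inter_subset_left))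

end LDP

section Tilted

variable {X : Type*} {I : X → EReal} {F : X → ℝ}

noncomputable def tiltedRate (F : X → ℝ) (I : X → EReal) (x : X) : EReal :=
  (⨆ y, ((F y : EReal) - I y)) - ((F x : EReal) - I x)

lemma neg_biInf_tiltedRate {s : ℝ} (hs : ⨆ y, ((F y : EReal) - I y) = s) (A : Set X) :
    -(⨅ x ∈ A, tiltedRate F I x) = ⨆ x ∈ A, ((F x : EReal) - I x + (-s : ℝ)) := by
  rw [EReal.neg_biInf]
  refine iSup_congr fun x => iSup_congr fun _ => ?_
  rw [tiltedRate, hs, EReal.neg_sub (.inl (EReal.coe_ne_bot s)) (.inl (EReal.coe_ne_top s)),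
    add_comm, EReal.coe_neg]

variable [TopologicalSpace X] [MeasurableSpace X] [OpensMeasurableSpace X] {P : ℕ → Measure X}

theorem exists_tendsto_scaledLog_expTilt_univ (hP : ∀ n, IsProbabilityMeasure (P n))
    (hupper : LDPUpperBound P I) (hlower : LDPLowerBound P I) (hF : Continuous F)
    {M : ℝ} (hM : ∀ x, |F x| ≤ M) :
    ∃ s : ℝ, ⨆ y, ((F y : EReal) - I y) = s ∧
      Tendsto (scaledLog fun n => expTilt P F n univ) atTop (𝓝 s) := by
  set S := ⨆ y, ((F y : EReal) - I y)
  set Z := scaledLog fun n => expTilt P F n univ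
  have hP_univ : scaledLog (fun _ => 1) = fun _ => 0 := funext fun n => by simp [scaledLog]
  have hZ_le : limsup Z atTop ≤ S := by
    simpa only [iSup_univ] using limsup_scaledLog_expTilt_le_biSup hupper hF hM isClosed_univ
  have hZ_ge : S ≤ liminf Z atTop := by
    simpa only [iSup_univ] using biSup_le_liminf_scaledLog_expTilt hlower hF isOpen_univ
  have hZ_le_M : limsup Z atTop ≤ M := by
    have h := limsup_scaledLog_expTilt_le (P := P) MeasurableSet.univ
      fun x _ => (abs_le.1 (hM x)).2
    simp only [measure_univ, hP_univ, limsup_const, zero_add] at h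
    exact h
  have hZ_ge_M : ((-M : ℝ) : EReal) ≤ liminf Z atTop := by
    have h := le_liminf_scaledLog_expTilt (P := P) (A := univ) hF.measurable
      fun x _ => (abs_le.1 (hM x)).1
    simp only [measure_univ, hP_univ, liminf_const, zero_add] at h
    exact h
  have hZ : liminf Z atTop ≤ limsup Z atTop := liminf_le_limsup
  have hS_top : S ≠ ⊤ :=
    ne_top_of_le_ne_top (EReal.coe_ne_top M) (hZ_ge.trans (hZ.trans hZ_le_M))
  have hS_bot : S ≠ ⊥ :=
    ne_bot_of_le_ne_bot (EReal.coe_ne_bot (-M)) (hZ_ge_M.trans (hZ.trans hZ_le))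
  refine ⟨S.toReal, (EReal.coe_toReal hS_top hS_bot).symm, ?_⟩
  rw [EReal.coe_toReal hS_top hS_bot]
  exact tendsto_of_le_liminf_of_limsup_le hZ_ge hZ_le

theorem ldpUpperBound_normalized_expTilt (hP : ∀ n, IsProbabilityMeasure (P n))
    (hupper : LDPUpperBound P I) (hlower : LDPLowerBound P I) (hF : Continuous F)
    {M : ℝ} (hM : ∀ x, |F x| ≤ M) :
    LDPUpperBound (fun n => (expTilt P F n univ)⁻¹ • expTilt P F n) (tiltedRate F I) := by
  obtain ⟨s, hs, hZ⟩ := exists_tendsto_scaledLog_expTilt_univ hP hupper hlower hF hM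
  intro C hC
  rw [neg_biInf_tiltedRate hs]
  calc _ ≤ limsup (scaledLog fun n => expTilt P F n C) atTop + (-s : ℝ) :=
        limsup_scaledLog_inv_mul_le hZ _
    _ ≤ (⨆ x ∈ C, ((F x : EReal) - I x)) + (-s : ℝ) := by
        gcongr; exact limsup_scaledLog_expTilt_le_biSup hupper hF hM hC
    _ ≤ _ := EReal.biSup_add_le _ _ _

theorem ldpLowerBound_normalized_expTilt (hP : ∀ n, IsProbabilityMeasure (P n))
    (hupper : LDPUpperBound P I) (hlower : LDPLowerBound P I) (hF : Continuous F)
    {M : ℝ} (hM : ∀ x, |F x| ≤ M) :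
    LDPLowerBound (fun n => (expTilt P F n univ)⁻¹ • expTilt P F n) (tiltedRate F I) := by
  obtain ⟨s, hs, hZ⟩ := exists_tendsto_scaledLog_expTilt_univ hP hupper hlower hF hM
  intro O hO
  rw [neg_biInf_tiltedRate hs]
  calc _ ≤ (⨆ x ∈ O, ((F x : EReal) - I x)) + (-s : ℝ) :=
        iSup₂_le fun x hx => by
          gcongr; exact le_iSup₂ (f := fun x _ => (F x : EReal) - I x) x hx
    _ ≤ liminf (scaledLog fun n => expTilt P F n O) atTop + (-s : ℝ) := by
        gcongr; exact biSup_le_liminf_scaledLog_expTilt hlower hF hO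
    _ ≤ _ := le_liminf_scaledLog_inv_mul hZ _

end Tilted

theorem tilted_LDP_general
    {X : Type*} [MetricSpace X]
    [MeasurableSpace X] [BorelSpace X]
    (P : ℕ → Measure X) (hP : ∀ n, IsProbabilityMeasure (P n))
    (I : X → ENNReal)
    (hupper : ∀ C : Set X, IsClosed C →
      Filter.limsup (fun n : ℕ => (((n : ℝ)⁻¹ : ℝ) : EReal) * ENNReal.log (P n C)) atTop
        ≤ -(⨅ x ∈ C, (I x : EReal)))
    (hlower : ∀ O : Set X, IsOpen O →
      -(⨅ x ∈ O, (I x : EReal)) ≤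
        Filter.liminf (fun n : ℕ => (((n : ℝ)⁻¹ : ℝ) : EReal) * ENNReal.log (P n O)) atTop)
    (F : X → ℝ) (hF : Continuous F) (hFb : ∃ M : ℝ, ∀ x, |F x| ≤ M)
    -- the tilted measures `P_n^F`
    (PF : ℕ → Measure X)
    (hPF : ∀ n, PF n =
      (∫⁻ x, ENNReal.ofReal (Real.exp (n * F x)) ∂(P n))⁻¹ •
        (P n).withDensity (fun x => ENNReal.ofReal (Real.exp (n * F x))))
    -- the tilted rate function `I^F`
    (IF : X → EReal)
    (hIF : ∀ x, IF x = (⨆ y, ((F y : EReal) - (I y : EReal))) - ((F x : EReal) - (I x : EReal))) :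
    (∀ C : Set X, IsClosed C →
      Filter.limsup (fun n : ℕ => (((n : ℝ)⁻¹ : ℝ) : EReal) * ENNReal.log (PF n C)) atTop
        ≤ -(⨅ x ∈ C, IF x)) ∧
    (∀ O : Set X, IsOpen O →
      -(⨅ x ∈ O, IF x) ≤
        Filter.liminf (fun n : ℕ => (((n : ℝ)⁻¹ : ℝ) : EReal) * ENNReal.log (PF n O)) atTop) := by
  obtain ⟨M, hM⟩ := hFb
  obtain rfl : PF = fun n => (expTilt P F n univ)⁻¹ • expTilt P F n := funext fun n => by
    rw [hPF n, expTilt, withDensity_apply _ MeasurableSet.univ, Measure.restrict_univ]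
  obtain rfl : IF = tiltedRate F fun x => (I x : EReal) := funext hIF
  exact ⟨ldpUpperBound_normalized_expTilt hP hupper hlower hF hM,
    ldpLowerBound_normalized_expTilt hP hupper hlower hF hM⟩

/-- Tilted large deviation principle (Varadhan tilting): if `(P n)` satisfies an LDP with
rate `n` and rate function `I`, and `F` is bounded continuous, then the tilted measures
`P_n^F(A) = (∫_A e^{nF} dP_n) / (∫_X e^{nF} dP_n)` satisfy an LDP with rate function
`I^F(x) = sup_y [F y - I y] - [F x - I x]`. -/
theorem tilted_LDP
    {X : Type*} [MetricSpace X] [CompleteSpace X] [TopologicalSpace.SeparableSpace X]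
    [MeasurableSpace X] [BorelSpace X]
    (P : ℕ → Measure X) (hP : ∀ n, IsProbabilityMeasure (P n))
    (I : X → ENNReal) (hI : LowerSemicontinuous I)
    (hupper : ∀ C : Set X, IsClosed C →
      Filter.limsup (fun n : ℕ => (((n : ℝ)⁻¹ : ℝ) : EReal) * ENNReal.log (P n C)) atTop
        ≤ -(⨅ x ∈ C, (I x : EReal)))
    (hlower : ∀ O : Set X, IsOpen O →
      -(⨅ x ∈ O, (I x : EReal)) ≤
        Filter.liminf (fun n : ℕ => (((n : ℝ)⁻¹ : ℝ) : EReal) * ENNReal.log (P n O)) atTop)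
    (F : X → ℝ) (hF : Continuous F) (hFb : ∃ M : ℝ, ∀ x, |F x| ≤ M)
    -- the tilted measures `P_n^F`
    (PF : ℕ → Measure X)
    (hPF : ∀ n, PF n =
      (∫⁻ x, ENNReal.ofReal (Real.exp (n * F x)) ∂(P n))⁻¹ •
        (P n).withDensity (fun x => ENNReal.ofReal (Real.exp (n * F x))))
    -- the tilted rate function `I^F`
    (IF : X → EReal)
    (hIF : ∀ x, IF x = (⨆ y, ((F y : EReal) - (I y : EReal))) - ((F x : EReal) - (I x : EReal))) :
    (∀ C : Set X, IsClosed C →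
      Filter.limsup (fun n : ℕ => (((n : ℝ)⁻¹ : ℝ) : EReal) * ENNReal.log (PF n C)) atTop
        ≤ -(⨅ x ∈ C, IF x)) ∧
    (∀ O : Set X, IsOpen O →
      -(⨅ x ∈ O, IF x) ≤
        Filter.liminf (fun n : ℕ => (((n : ℝ)⁻¹ : ℝ) : EReal) * ENNReal.log (PF n O)) atTop) :=
  tilted_LDP_general P hP I hupper hlower F hF hFb PF hPF IF hIF
end

section
/- Let X be a complete separable metric space, (P_n) Borel probability measures on X, and I : X → [0,∞] lower semicontinuous such that for every open set O ⊆ X, liminf_{n→∞} (1/n) log P_n(O) ≥ −inf_{x∈O} I(x). Let F : X → ℝ be bounded and continuous. Then for every open set O ⊆ X, liminf_{n→∞} (1/n) log ∫_O e^{nF(x)} P_n(dx) ≥ sup_{x∈O}[F(x) − I(x)]. -/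
/-!
Fix `x ∈ O` and `c < F x`. On the open neighbourhood `U = O ∩ {F > c}` of `x` the
integrand is at least `e^{nc}`, so `∫_O e^{nF} dPₙ ≥ e^{nc} Pₙ(U)`. Taking `(1/n) log` and
the `liminf`, the large deviation lower bound for `U` gives `liminf ≥ c - inf_U I ≥ c - I x`;
now let `c ↑ F x`.
-/

open Filter MeasureTheory Topology

lemma EReal.coe_add_coe_inv_mul {t : ℝ} (ht : 0 < t) (c : ℝ) (z : EReal) :
    (c : EReal) + ((t⁻¹ : ℝ) : EReal) * z =
      ((t⁻¹ : ℝ) : EReal) * (((t * c : ℝ) : EReal) + z) := by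
  rw [EReal.left_distrib_of_nonneg_of_ne_top (EReal.coe_nonneg.2 (inv_nonneg.2 ht.le))
    (EReal.coe_ne_top _), ← EReal.coe_mul, inv_mul_cancel_left₀ ht.ne']

section TiltedLowerBound

variable {α : Type*} [MeasurableSpace α] {U O : Set α}

lemma const_mul_measure_le_setLIntegral {μ : Measure α} {f : α → ENNReal} {a : ENNReal}
    (hU : MeasurableSet U) (hUO : U ⊆ O) (haf : ∀ y ∈ U, a ≤ f y) :
    a * μ U ≤ ∫⁻ y in O, f y ∂μ :=
  calc a * μ U = ∫⁻ _ in U, a ∂μ := (setLIntegral_const U a).symm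
    _ ≤ ∫⁻ y in U, f y ∂μ := setLIntegral_mono' hU haf
    _ ≤ ∫⁻ y in O, f y ∂μ := lintegral_mono_set hUO

variable {F : α → ℝ} {c : ℝ}

lemma coe_add_inv_mul_log_measure_le_inv_mul_log_setLIntegral_exp {μ : Measure α} {n : ℕ}
    (hn : 0 < n) (hU : MeasurableSet U) (hUO : U ⊆ O) (hcF : ∀ y ∈ U, c ≤ F y) :
    (c : EReal) + (((n : ℝ)⁻¹ : ℝ) : EReal) * ENNReal.log (μ U) ≤
      (((n : ℝ)⁻¹ : ℝ) : EReal) *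
        ENNReal.log (∫⁻ y in O, ENNReal.ofReal (Real.exp (n * F y)) ∂μ) := by
  have hn' : (0 : ℝ) < n := Nat.cast_pos.2 hn
  have hint : ENNReal.ofReal (Real.exp (n * c)) * μ U ≤
      ∫⁻ y in O, ENNReal.ofReal (Real.exp (n * F y)) ∂μ :=
    const_mul_measure_le_setLIntegral hU hUO fun y hy =>
      ENNReal.ofReal_le_ofReal <|
        Real.exp_le_exp.2 (mul_le_mul_of_nonneg_left (hcF y hy) hn'.le)
  have hlog := ENNReal.log_monotone hint
  rw [ENNReal.log_mul_add, ENNReal.log_ofReal_of_pos (Real.exp_pos _), Real.log_exp] at hlog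
  rw [EReal.coe_add_coe_inv_mul hn']
  exact mul_le_mul_of_nonneg_left hlog (EReal.coe_nonneg.2 (inv_nonneg.2 hn'.le))

lemma coe_add_liminf_log_measure_le_liminf_log_setLIntegral_exp (μ : ℕ → Measure α)
    (hU : MeasurableSet U) (hUO : U ⊆ O) (hcF : ∀ y ∈ U, c ≤ F y) :
    (c : EReal) +
        liminf (fun n : ℕ => (((n : ℝ)⁻¹ : ℝ) : EReal) * ENNReal.log (μ n U)) atTop ≤
      liminf (fun n : ℕ => (((n : ℝ)⁻¹ : ℝ) : EReal) *
        ENNReal.log (∫⁻ y in O, ENNReal.ofReal (Real.exp (n * F y)) ∂(μ n))) atTop :=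
  calc _ = liminf (fun _ : ℕ => (c : EReal)) atTop +
        liminf (fun n : ℕ => (((n : ℝ)⁻¹ : ℝ) : EReal) * ENNReal.log (μ n U)) atTop := by
        rw [liminf_const]
    _ ≤ liminf (fun n : ℕ =>
          (c : EReal) + (((n : ℝ)⁻¹ : ℝ) : EReal) * ENNReal.log (μ n U)) atTop :=
        EReal.le_liminf_add
    _ ≤ _ := liminf_le_liminf <| (eventually_gt_atTop 0).mono fun _ hn =>
        coe_add_inv_mul_log_measure_le_inv_mul_log_setLIntegral_exp hn hU hUO hcF

end TiltedLowerBound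

theorem varadhan_lower_bound_general
    {X : Type*} [MetricSpace X]
    [MeasurableSpace X] [BorelSpace X]
    (P : ℕ → Measure X)
    (I : X → ENNReal)
    (hlower : ∀ O : Set X, IsOpen O →
      -(⨅ x ∈ O, (I x : EReal)) ≤
        Filter.liminf (fun n : ℕ => (((n : ℝ)⁻¹ : ℝ) : EReal) * ENNReal.log (P n O)) atTop)
    (F : X → ℝ) (hF : Continuous F) :
    ∀ O : Set X, IsOpen O →
      (⨆ x ∈ O, ((F x : EReal) - (I x : EReal))) ≤
      Filter.liminf
        (fun n : ℕ => (((n : ℝ)⁻¹ : ℝ) : EReal) *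
          ENNReal.log (∫⁻ x in O, ENNReal.ofReal (Real.exp (n * F x)) ∂(P n))) atTop := by
  intro O hO
  refine iSup₂_le fun x hx => ?_
  rw [sub_eq_add_neg]
  refine EReal.add_le_of_forall_lt fun a ha b hb => ?_
  obtain ⟨c, hac, hc⟩ := EReal.exists_between_coe_real ha
  set U := O ∩ F ⁻¹' Set.Ioi c
  have hUopen : IsOpen U := hO.inter (isOpen_Ioi.preimage hF)
  have hxU : x ∈ U := ⟨hx, EReal.coe_lt_coe_iff.1 hc⟩
  calc a + b ≤ c + -(I x : EReal) := add_le_add hac.le hb.le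
    _ ≤ c + -(⨅ y ∈ U, (I y : EReal)) :=
        add_le_add_right (EReal.neg_le_neg_iff.2 <|
          iInf₂_le (f := fun y _ => (I y : EReal)) x hxU) _
    _ ≤ _ := add_le_add_right (hlower U hUopen) _
    _ ≤ _ := coe_add_liminf_log_measure_le_liminf_log_setLIntegral_exp P
        hUopen.measurableSet Set.inter_subset_left fun _ hy => hy.2.le

/-- Lower bound half of Varadhan's lemma: given the LDP lower bound for open sets with
rate function `I`, for every bounded continuous `F` and every open set `O`,
`liminf (1/n) log ∫_O e^{nF} dP_n ≥ sup_{x ∈ O} [F x - I x]` (in the extended reals;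
the supremum over the empty set is `-∞`). -/
theorem varadhan_lower_bound
    {X : Type*} [MetricSpace X] [CompleteSpace X] [TopologicalSpace.SeparableSpace X]
    [MeasurableSpace X] [BorelSpace X]
    (P : ℕ → Measure X) (hP : ∀ n, IsProbabilityMeasure (P n))
    (I : X → ENNReal) (hI : LowerSemicontinuous I)
    (hlower : ∀ O : Set X, IsOpen O →
      -(⨅ x ∈ O, (I x : EReal)) ≤
        Filter.liminf (fun n : ℕ => (((n : ℝ)⁻¹ : ℝ) : EReal) * ENNReal.log (P n O)) atTop)
    (F : X → ℝ) (hF : Continuous F) (hFb : ∃ M : ℝ, ∀ x, |F x| ≤ M) :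
    ∀ O : Set X, IsOpen O →
      (⨆ x ∈ O, ((F x : EReal) - (I x : EReal))) ≤
      Filter.liminf
        (fun n : ℕ => (((n : ℝ)⁻¹ : ℝ) : EReal) *
          ENNReal.log (∫⁻ x in O, ENNReal.ofReal (Real.exp (n * F x)) ∂(P n))) atTop :=
  varadhan_lower_bound_general P I hlower F hF
end

section
/- Fix β > 0, Δ ∈ ℝ, and (x_1,x_2) ∈ ℝ² with |x_1| < x_2 and 0 < x_2 < 1. Define W(y_1,y_2) = x_1y_1 + x_2y_2 − log(e^{βΔ+y_1+y_2} + e^{βΔ+y_2−y_1} + 1) + log(1+2e^{βΔ}). Then W attains its supremum over ℝ² at the unique point (y_1*, y_2*) given by y_1* = artanh(x_1/x_2) and y_2* = −βΔ + log( x_2 / (2(1−x_2) cosh y_1*) ), and the supremum equals R(x_1,x_2) = x_1 y_1* + x_2 y_2* + log(1−x_2) + log(1+2e^{βΔ}). -/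
/-!
With `p = (x₂ + x₁)/2`, `q = (x₂ - x₁)/2` and `r = 1 - x₂`, the hypotheses say exactly that
`(p, q, r)` is a probability vector with positive entries, and `W(y)` is, up to an additive
constant, `p a + q b - log (eᵃ + eᵇ + e⁰)` at `a = βΔ + y₁ + y₂`, `b = βΔ + y₂ - y₁`. By Gibbs'
inequality (`log t ≤ t - 1` applied to `tᵢ = softmaxᵢ / pᵢ`) such a function is maximised
exactly where the softmax of `(a, b, 0)` equals `(p, q, r)`, i.e. `a = log (p/r)` and
`b = log (q/r)`; solving for `y` gives `y₁* = (log p - log q)/2 = artanh (x₁/x₂)` and the stated `y₂*`.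
-/

noncomputable section

/-- The inverse hyperbolic tangent. -/
def artanh (x : ℝ) : ℝ := Real.log ((1 + x) / (1 - x)) / 2

section LogSumExp

open Real Finset

variable {ι : Type*} [Fintype ι] {p : ι → ℝ}

theorem sum_mul_log_lt_zero (hp : ∀ i, 0 < p i) {t : ι → ℝ} (ht : ∀ i, 0 < t i)
    (hpt : ∑ i, p i * t i = ∑ i, p i) (hne : ∃ i, t i ≠ 1) :
    ∑ i, p i * log (t i) < 0 := by
  have hlt : ∑ i, p i * log (t i) < ∑ i, p i * (t i - 1) :=
    sum_lt_sum (fun i _ => mul_le_mul_of_nonneg_left (log_le_sub_one_of_pos (ht i)) (hp i).le)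
      (hne.imp fun i hi => ⟨mem_univ i, mul_lt_mul_of_pos_left (log_lt_sub_one_of_pos (ht i) hi) (hp i)⟩)
  simpa only [mul_sub, mul_one, sum_sub_distrib, hpt, sub_self] using hlt

theorem log_sum_exp_log_add (hp : ∀ i, 0 < p i) (hp1 : ∑ i, p i = 1) (c : ℝ) :
    log (∑ i, exp (log (p i) + c)) = c := by
  simp only [exp_add, exp_log (hp _), ← sum_mul, hp1, one_mul, log_exp]

theorem sum_mul_sub_log_sum_exp_log_add (hp : ∀ i, 0 < p i) (hp1 : ∑ i, p i = 1) (c : ℝ) :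
    ∑ i, p i * (log (p i) + c) - log (∑ i, exp (log (p i) + c)) = ∑ i, p i * log (p i) := by
  rw [log_sum_exp_log_add hp hp1]
  simp only [mul_add, sum_add_distrib, ← sum_mul, hp1, one_mul, add_sub_cancel_right]

theorem sum_mul_sub_log_sum_exp_lt (hp : ∀ i, 0 < p i) (hp1 : ∑ i, p i = 1) {a : ι → ℝ}
    (hne : ∃ i, a i - log (∑ j, exp (a j)) ≠ log (p i)) :
    ∑ i, p i * a i - log (∑ i, exp (a i)) < ∑ i, p i * log (p i) := by
  set S := ∑ j, exp (a j)
  have hS : 0 < S := by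
    obtain ⟨i, -⟩ := hne
    exact sum_pos (fun j _ => exp_pos (a j)) ⟨i, mem_univ i⟩
  have ht : ∀ i, 0 < exp (a i) / (p i * S) := fun i => by have := hp i; positivity
  have hlog : ∀ i, log (exp (a i) / (p i * S)) = a i - log (p i) - log S := fun i => by
    rw [log_div (exp_pos _).ne' (mul_pos (hp i) hS).ne', log_mul (hp i).ne' hS.ne', log_exp]
    ring
  have hpt : ∑ i, p i * (exp (a i) / (p i * S)) = ∑ i, p i := by
    rw [hp1, ← div_self hS.ne', sum_div]
    exact sum_congr rfl fun i _ => by field_simp [(hp i).ne']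
  have hne' : ∃ i, exp (a i) / (p i * S) ≠ 1 := hne.imp fun i hi h1 => hi <| by
    rw [div_eq_one_iff_eq (mul_pos (hp i) hS).ne'] at h1
    rw [← log_exp (a i), h1, log_mul (hp i).ne' hS.ne', add_sub_cancel_right]
  have key := sum_mul_log_lt_zero hp ht hpt hne'
  simp only [hlog, mul_sub, sum_sub_distrib, ← sum_mul, hp1, one_mul] at key
  linarith

end LogSumExp

section Hyperbolic

open Real

variable {p q : ℝ}

theorem artanh_sub_div_add (hp : 0 < p) (hq : 0 < q) :
    _root_.artanh ((p - q) / (p + q)) = (log p - log q) / 2 := by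
  have hpq : p + q ≠ 0 := by positivity
  have hnum : 1 + (p - q) / (p + q) = 2 * p / (p + q) := by field_simp; ring
  have hden : 1 - (p - q) / (p + q) = 2 * q / (p + q) := by field_simp; ring
  rw [_root_.artanh, hnum, hden, div_div_div_cancel_right₀ hpq, mul_div_mul_left _ _ two_ne_zero,
    log_div hp.ne' hq.ne']

theorem cosh_half_log_sub_mul_exp (hp : 0 < p) (hq : 0 < q) :
    cosh ((log p - log q) / 2) * exp ((log p + log q) / 2) = (p + q) / 2 := by
  rw [cosh_eq, div_mul_eq_mul_div, add_mul, ← exp_add, ← exp_add,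
    show (log p - log q) / 2 + (log p + log q) / 2 = log p by ring,
    show -((log p - log q) / 2) + (log p + log q) / 2 = log q by ring, exp_log hp, exp_log hq]

theorem log_add_div_two_mul_cosh (hp : 0 < p) (hq : 0 < q) {r : ℝ} (hr : 0 < r) :
    log ((p + q) / (2 * r * cosh ((log p - log q) / 2))) = (log p + log q) / 2 - log r := by
  have hc := cosh_pos ((log p - log q) / 2)
  have h2 := cosh_half_log_sub_mul_exp hp hq
  rw [show p + q = 2 * (cosh ((log p - log q) / 2) * exp ((log p + log q) / 2)) by linarith,
    show 2 * (cosh ((log p - log q) / 2) * exp ((log p + log q) / 2)) /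
        (2 * r * cosh ((log p - log q) / 2)) = exp ((log p + log q) / 2) / r by
      field_simp,
    log_div (exp_pos _).ne' hr.ne', log_exp]

end Hyperbolic

section ThreePoint

open Real Finset

variable {p q r : ℝ}

theorem mul_add_mul_sub_log_exp_add_exp_add_one_eq (hp : 0 < p) (hq : 0 < q) (hr : 0 < r)
    (hpqr : p + q + r = 1) :
    p * (log p - log r) + q * (log q - log r) - log (exp (log p - log r) + exp (log q - log r) + 1)
      = p * log p + q * log q + r * log r := by
  have hw : ∀ i, 0 < ![p, q, r] i := fun i => by fin_cases i <;> assumption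
  have hw1 : ∑ i, ![p, q, r] i = 1 := by simpa [Fin.sum_univ_three] using hpqr
  have h := sum_mul_sub_log_sum_exp_log_add hw hw1 (-log r)
  simp only [Fin.sum_univ_three, Fin.isValue, Matrix.cons_val_zero, Matrix.cons_val_one,
    Matrix.cons_val, ← sub_eq_add_neg, sub_self, exp_zero] at h
  linear_combination h

theorem mul_add_mul_sub_log_exp_add_exp_add_one_lt (hp : 0 < p) (hq : 0 < q) (hr : 0 < r)
    (hpqr : p + q + r = 1) {a b : ℝ} (hab : (a, b) ≠ (log p - log r, log q - log r)) :
    p * a + q * b - log (exp a + exp b + 1) < p * log p + q * log q + r * log r := by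
  have hw : ∀ i, 0 < ![p, q, r] i := fun i => by fin_cases i <;> assumption
  have hw1 : ∑ i, ![p, q, r] i = 1 := by simpa [Fin.sum_univ_three] using hpqr
  have hne : ∃ i, ![a, b, 0] i - log (∑ j, exp (![a, b, 0] j)) ≠ log (![p, q, r] i) := by
    by_contra! h
    have h₀ := h 0
    have h₁ := h 1
    have h₂ := h 2
    simp only [Fin.sum_univ_three, Fin.isValue, Matrix.cons_val_zero, Matrix.cons_val_one,
      Matrix.cons_val, exp_zero, zero_sub] at h₀ h₁ h₂
    exact hab (Prod.ext (by linarith) (by linarith))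
  simpa only [Fin.sum_univ_three, Fin.isValue, Matrix.cons_val_zero, Matrix.cons_val_one,
    Matrix.cons_val, mul_zero, add_zero, exp_zero] using sum_mul_sub_log_sum_exp_lt hw hw1 hne

end ThreePoint

theorem sup_W_pure_general (β Δ x₁ x₂ : ℝ) (hx : |x₁| < x₂)
    (hx1 : x₂ < 1)
    (W : ℝ × ℝ → ℝ)
    (hW : ∀ y : ℝ × ℝ, W y =
      x₁ * y.1 + x₂ * y.2 -
        Real.log (Real.exp (β * Δ + y.1 + y.2) + Real.exp (β * Δ + y.2 - y.1) + 1) +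
        Real.log (1 + 2 * Real.exp (β * Δ)))
    (y₁s y₂s : ℝ)
    (hy₁ : y₁s = artanh (x₁ / x₂))
    (hy₂ : y₂s = -(β * Δ) + Real.log (x₂ / (2 * (1 - x₂) * Real.cosh y₁s))) :
    (∀ y : ℝ × ℝ, y ≠ (y₁s, y₂s) → W y < W (y₁s, y₂s)) ∧
    W (y₁s, y₂s) =
      x₁ * y₁s + x₂ * y₂s + Real.log (1 - x₂) + Real.log (1 + 2 * Real.exp (β * Δ)) := by
  obtain ⟨hx₁l, hx₁u⟩ := abs_lt.mp hx
  obtain ⟨p, hp, hpdef⟩ : ∃ p, 0 < p ∧ p = (x₂ + x₁) / 2 := ⟨_, by linarith, rfl⟩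
  obtain ⟨q, hq, hqdef⟩ : ∃ q, 0 < q ∧ q = (x₂ - x₁) / 2 := ⟨_, by linarith, rfl⟩
  obtain ⟨r, hr, hrdef⟩ : ∃ r, 0 < r ∧ r = 1 - x₂ := ⟨_, by linarith, rfl⟩
  obtain rfl : x₁ = p - q := by linarith
  obtain rfl : x₂ = p + q := by linarith
  have hpqr : p + q + r = 1 := by linarith
  rw [artanh_sub_div_add hp hq] at hy₁
  rw [hy₁, ← hrdef, log_add_div_two_mul_cosh hp hq hr] at hy₂
  have ha : β * Δ + y₁s + y₂s = Real.log p - Real.log r := by rw [hy₁, hy₂]; ring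
  have hb : β * Δ + y₂s - y₁s = Real.log q - Real.log r := by rw [hy₁, hy₂]; ring
  have h_star := mul_add_mul_sub_log_exp_add_exp_add_one_eq hp hq hr hpqr
  rw [← ha, ← hb] at h_star
  refine ⟨fun y hy => ?_, ?_⟩
  · have hab : (β * Δ + y.1 + y.2, β * Δ + y.2 - y.1)
        ≠ (Real.log p - Real.log r, Real.log q - Real.log r) := by
      rw [← ha, ← hb]
      intro h
      simp only [Prod.mk.injEq] at h
      exact hy (Prod.ext (by linarith) (by linarith))
    have h := mul_add_mul_sub_log_exp_add_exp_add_one_lt hp hq hr hpqr hab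
    rw [hW, hW]
    linarith
  · rw [hW, ← hrdef]
    linear_combination h_star - p * ha - q * hb + Real.log r * hpqr

/-- For the pure Blume-Capel model, the function
`W(y₁,y₂) = x₁y₁ + x₂y₂ − log(e^{βΔ+y₁+y₂} + e^{βΔ+y₂−y₁} + 1) + log(1+2e^{βΔ})`
attains its supremum over `ℝ²` at the unique point `(y₁*, y₂*)` with
`y₁* = artanh(x₁/x₂)`, `y₂* = −βΔ + log(x₂/(2(1−x₂)cosh y₁*))`, and the supremum equals
`R(x₁,x₂) = x₁y₁* + x₂y₂* + log(1−x₂) + log(1+2e^{βΔ})`. -/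
theorem sup_W_pure (β Δ x₁ x₂ : ℝ) (hβ : 0 < β) (hx : |x₁| < x₂) (hx0 : 0 < x₂)
    (hx1 : x₂ < 1)
    (W : ℝ × ℝ → ℝ)
    (hW : ∀ y : ℝ × ℝ, W y =
      x₁ * y.1 + x₂ * y.2 -
        Real.log (Real.exp (β * Δ + y.1 + y.2) + Real.exp (β * Δ + y.2 - y.1) + 1) +
        Real.log (1 + 2 * Real.exp (β * Δ)))
    (y₁s y₂s : ℝ)
    (hy₁ : y₁s = artanh (x₁ / x₂))
    (hy₂ : y₂s = -(β * Δ) + Real.log (x₂ / (2 * (1 - x₂) * Real.cosh y₁s))) :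
    (∀ y : ℝ × ℝ, y ≠ (y₁s, y₂s) → W y < W (y₁s, y₂s)) ∧
    W (y₁s, y₂s) =
      x₁ * y₁s + x₂ * y₂s + Real.log (1 - x₂) + Real.log (1 + 2 * Real.exp (β * Δ)) :=
  sup_W_pure_general β Δ x₁ x₂ hx hx1 W hW y₁s y₂s hy₁ hy₂
end
end

section
/- Fix β > 0 and Δ ∈ ℝ. On the open domain D = {(x_1,x_2) : 0 < |x_1| < x_2 < 1} define G(x_1,x_2) = x_1·artanh(x_1/x_2) + x_2·(−βΔ + log(x_2/(2(1−x_2)cosh(artanh(x_1/x_2))))) + log(1−x_2) + log(1+2e^{βΔ}) − βx_1²/2 (i.e. G = R − βx_1²/2 with R the explicit pure-model rate function). Then for (m,q) ∈ D, the gradient of G vanishes at (m,q) if and only if tanh(βm) = m/q and βΔ = log( √(q²−m²) / (2(1−q)) ). -/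
noncomputable section

/-- `G = R − βx₁²/2` built from the explicit pure-model rate function `R`. -/
def Gfun (β Δ : ℝ) (x : ℝ × ℝ) : ℝ :=
  x.1 * artanh (x.1 / x.2) +
    x.2 * (-(β * Δ) + Real.log (x.2 / (2 * (1 - x.2) * Real.cosh (artanh (x.1 / x.2))))) +
    Real.log (1 - x.2) + Real.log (1 + 2 * Real.exp (β * Δ)) - β * x.1 ^ 2 / 2

/-!
On the domain, with `p± = (x₂ ± x₁)/2` and `p₀ = 1 − x₂` (the law of a single spin taking the
values `±1, 0`), the rate function is `R = Σ pᵢ log pᵢ − βΔ x₂ + log(1 + 2e^{βΔ})`. Differentiating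
`t log t` gives back the dual variables of the Legendre transform,
`∇R = (artanh(x₁/x₂), log(√(x₂² − x₁²)/(2(1 − x₂))) − βΔ) = (y₁*, y₂*)`, so `∇G = 0` says
`artanh(m/q) = βm`, i.e. `tanh(βm) = m/q`, and `y₂* = 0`.
-/

open Filter Topology ContinuousLinearMap
open Real (log exp cosh tanh)

theorem HasFDerivAt.mul_log {E : Type*} [NormedAddCommGroup E] [NormedSpace ℝ E] {f : E → ℝ}
    {f' : E →L[ℝ] ℝ} {x : E} (hf : HasFDerivAt f f' x) (hx : f x ≠ 0) :
    HasFDerivAt (fun y => f y * Real.log (f y)) ((Real.log (f x) + 1) • f') x :=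
  (Real.hasDerivAt_mul_log hx).comp_hasFDerivAt x hf

theorem ContinuousLinearMap.smul_fst_add_smul_snd_eq_zero_iff {𝕜 : Type*}
    [NontriviallyNormedField 𝕜] {a b : 𝕜} :
    a • fst 𝕜 𝕜 𝕜 + b • snd 𝕜 𝕜 𝕜 = 0 ↔ a = 0 ∧ b = 0 := by
  constructor
  · intro h
    exact ⟨by simpa using congr($h (1, 0)), by simpa using congr($h (0, 1))⟩
  · rintro ⟨rfl, rfl⟩
    ext <;> simp

theorem artanh_eq_real_artanh {x : ℝ} (hx : x ∈ Set.Icc (-1) 1) : artanh x = Real.artanh x := by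
  rw [Real.artanh_eq_half_log hx, artanh]
  ring

theorem artanh_eq_iff_tanh_eq {t y : ℝ} (ht : t ∈ Set.Ioo (-1) 1) :
    artanh t = y ↔ tanh y = t := by
  rw [artanh_eq_real_artanh (Set.Ioo_subset_Icc_self ht)]
  constructor
  · rintro rfl
    exact Real.tanh_artanh ht
  · rintro rfl
    exact Real.artanh_tanh y

section

variable {u v : ℝ}

theorem div_mem_Ioo_of_abs_lt (h : |u| < v) : u / v ∈ Set.Ioo (-1) 1 := by
  have hv : 0 < v := (abs_nonneg u).trans_lt h
  rw [Set.mem_Ioo, lt_div_iff₀ hv, div_lt_one hv]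
  obtain ⟨h₁, h₂⟩ := abs_lt.mp h
  constructor <;> linarith

theorem artanh_div_eq (h : |u| < v) :
    artanh (u / v) = (log ((v + u) / 2) - log ((v - u) / 2)) / 2 := by
  obtain ⟨h₁, h₂⟩ := abs_lt.mp h
  have hv : v ≠ 0 := by linarith
  have hvu : v - u ≠ 0 := by linarith
  rw [artanh, ← Real.log_div (by linarith) (by linarith)]
  congr 2
  field_simp

theorem div_cosh_artanh_div (h : |u| < v) :
    v / cosh (artanh (u / v)) = Real.sqrt (v ^ 2 - u ^ 2) := by
  have hv : 0 < v := (abs_nonneg u).trans_lt h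
  have hsq : v ^ 2 - u ^ 2 = v ^ 2 * (1 - (u / v) ^ 2) := by
    field_simp
  rw [artanh_eq_real_artanh (Set.Ioo_subset_Icc_self (div_mem_Ioo_of_abs_lt h)),
    Real.cosh_artanh (div_mem_Ioo_of_abs_lt h), hsq, Real.sqrt_mul (sq_nonneg v),
    Real.sqrt_sq hv.le, div_div_eq_mul_div, div_one]

theorem log_sqrt_div_eq (h : |u| < v) (hv : v < 1) :
    log (Real.sqrt (v ^ 2 - u ^ 2) / (2 * (1 - v))) =
      (log ((v + u) / 2) + log ((v - u) / 2)) / 2 - log (1 - v) := by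
  obtain ⟨h₁, h₂⟩ := abs_lt.mp h
  have hplus : 0 < (v + u) / 2 := by linarith
  have hminus : 0 < (v - u) / 2 := by linarith
  have hsq : v ^ 2 - u ^ 2 = 2 ^ 2 * ((v + u) / 2 * ((v - u) / 2)) := by ring
  rw [hsq, Real.sqrt_mul (by norm_num), Real.sqrt_sq (by norm_num),
    mul_div_mul_left _ _ two_ne_zero, Real.log_div (by positivity) (by linarith), Real.log_sqrt (by positivity),
    Real.log_mul hplus.ne' hminus.ne']

end

def spinNegEntropy (x : ℝ × ℝ) : ℝ :=
  (x.2 + x.1) / 2 * log ((x.2 + x.1) / 2) + (x.2 - x.1) / 2 * log ((x.2 - x.1) / 2) +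
    (1 - x.2) * log (1 - x.2)

theorem Gfun_eq_spinNegEntropy (β Δ : ℝ) {x : ℝ × ℝ} (h₁ : |x.1| < x.2) (h₂ : x.2 < 1) :
    Gfun β Δ x =
      spinNegEntropy x - β * Δ * x.2 + log (1 + 2 * exp (β * Δ)) - β * x.1 ^ 2 / 2 := by
  have hcosh : x.2 / (2 * (1 - x.2) * cosh (artanh (x.1 / x.2))) =
      Real.sqrt (x.2 ^ 2 - x.1 ^ 2) / (2 * (1 - x.2)) := by
    rw [mul_comm, ← div_div, div_cosh_artanh_div h₁]
  rw [Gfun, spinNegEntropy, hcosh, log_sqrt_div_eq h₁ h₂, artanh_div_eq h₁]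
  ring

section

variable {m q : ℝ}

theorem hasFDerivAt_spinNegEntropy (h₁ : |m| < q) (h₂ : q < 1) :
    HasFDerivAt spinNegEntropy
      (artanh (m / q) • fst ℝ ℝ ℝ +
        log (Real.sqrt (q ^ 2 - m ^ 2) / (2 * (1 - q))) • snd ℝ ℝ ℝ) (m, q) := by
  obtain ⟨hm₁, hm₂⟩ := abs_lt.mp h₁
  have hplus : HasFDerivAt (fun x : ℝ × ℝ => (x.2 + x.1) / 2)
      ((2⁻¹ : ℝ) • (snd ℝ ℝ ℝ + fst ℝ ℝ ℝ)) (m, q) := by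
    simpa only [Pi.add_apply, ← div_eq_mul_inv] using
      (hasFDerivAt_snd.add hasFDerivAt_fst).mul_const (2⁻¹ : ℝ)
  have hminus : HasFDerivAt (fun x : ℝ × ℝ => (x.2 - x.1) / 2)
      ((2⁻¹ : ℝ) • (snd ℝ ℝ ℝ - fst ℝ ℝ ℝ)) (m, q) := by
    simpa only [Pi.sub_apply, ← div_eq_mul_inv] using
      (hasFDerivAt_snd.sub hasFDerivAt_fst).mul_const (2⁻¹ : ℝ)
  have hzero := (hasFDerivAt_snd (𝕜 := ℝ) (p := (m, q))).const_sub (1 : ℝ)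
  rw [artanh_div_eq h₁, log_sqrt_div_eq h₁ h₂]
  refine (((hplus.mul_log (by simp; linarith)).add (hminus.mul_log (by simp; linarith))).add
    (hzero.mul_log (by simp; linarith))).congr_fderiv ?_
  ext <;> simp <;> ring

theorem hasFDerivAt_Gfun (β Δ : ℝ) (h₁ : |m| < q) (h₂ : q < 1) :
    HasFDerivAt (Gfun β Δ)
      ((artanh (m / q) - β * m) • fst ℝ ℝ ℝ +
        (log (Real.sqrt (q ^ 2 - m ^ 2) / (2 * (1 - q))) - β * Δ) • snd ℝ ℝ ℝ) (m, q) := by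
  have hdomain : IsOpen {x : ℝ × ℝ | |x.1| < x.2 ∧ x.2 < 1} :=
    (isOpen_lt continuous_fst.abs continuous_snd).inter (isOpen_lt continuous_snd continuous_const)
  have hG : Gfun β Δ =ᶠ[𝓝 (m, q)] fun x =>
      spinNegEntropy x - β * Δ * x.2 + log (1 + 2 * exp (β * Δ)) - β * x.1 ^ 2 / 2 :=
    eventually_of_mem (hdomain.mem_nhds ⟨h₁, h₂⟩) fun x hx => Gfun_eq_spinNegEntropy β Δ hx.1 hx.2
  have hquad := (((hasDerivAt_pow 2 m).const_mul β).div_const 2).comp_hasFDerivAt (m, q)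
    (hasFDerivAt_fst (𝕜 := ℝ) (p := (m, q)))
  refine ((((hasFDerivAt_spinNegEntropy h₁ h₂).sub
    ((hasFDerivAt_snd (𝕜 := ℝ) (p := (m, q))).const_mul (β * Δ))).add_const _).sub
    hquad).congr_of_eventuallyEq hG |>.congr_fderiv ?_
  ext <;> simp
  ring

end

theorem gradient_G_vanishes_iff_general (β Δ m q : ℝ)
    (hmq : |m| < q) (hq : q < 1) :
    fderiv ℝ (Gfun β Δ) (m, q) = 0 ↔
      (Real.tanh (β * m) = m / q ∧
        β * Δ = Real.log (Real.sqrt (q ^ 2 - m ^ 2) / (2 * (1 - q)))) := by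
  rw [(hasFDerivAt_Gfun β Δ hmq hq).fderiv, smul_fst_add_smul_snd_eq_zero_iff, sub_eq_zero,
    sub_eq_zero, artanh_eq_iff_tanh_eq (div_mem_Ioo_of_abs_lt hmq), eq_comm (a := log _)]

/-- On the open domain `{0 < |x₁| < x₂ < 1}`, the gradient of `G = R − βx₁²/2` vanishes
at `(m,q)` if and only if the mean-field fixed-point equations
`tanh(βm) = m/q` and `βΔ = log(√(q²−m²)/(2(1−q)))` hold. -/
theorem gradient_G_vanishes_iff (β Δ m q : ℝ) (hβ : 0 < β)
    (hm : 0 < |m|) (hmq : |m| < q) (hq : q < 1) :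
    fderiv ℝ (Gfun β Δ) (m, q) = 0 ↔
      (Real.tanh (β * m) = m / q ∧
        β * Δ = Real.log (Real.sqrt (q ^ 2 - m ^ 2) / (2 * (1 - q)))) :=
  gradient_G_vanishes_iff_general β Δ m q hmq hq

end
end

section
/- There exist no real numbers β and Δ satisfying simultaneously 5 − 4β = 2(β − 2) cosh(βΔ) and cosh(βΔ) = (12β − 19)/8. (Substituting the second equation into the first yields 4β² − 9β + 6 = 0, which has negative discriminant.) Consequently, in the maximally disordered case δ = 0 (p = 1/2) the Blume–Capel model with bimodal random crystal field on the complete graph has no tricritical point: the transition is continuous for all values of Δ. -/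
/-- In the maximally disordered case `δ = 0` (`p = 1/2`) there is no tricritical point:
no real `β`, `Δ` satisfy simultaneously `5 − 4β = 2(β − 2)cosh(βΔ)` and
`cosh(βΔ) = (12β − 19)/8`. -/
theorem no_tricritical_point_max_disorder :
    ¬ ∃ β Δ : ℝ, 5 - 4 * β = 2 * (β - 2) * Real.cosh (β * Δ) ∧
      Real.cosh (β * Δ) = (12 * β - 19) / 8 := by
  rintro ⟨β, Δ, h1, h2⟩
  rw [h2] at h1
  have : 4 * β ^ 2 - 9 * β + 6 = 0 := by field_simp at h1; nlinarith [h1]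
  nlinarith [sq_nonneg (8 * β - 9)]
end

section
/- Fix δ ∈ [0, 1/2]. Suppose (β_n, Δ_n) is a sequence of pairs of real numbers with β_n > 0 satisfying the continuous-transition equation 5 − 4β_n = 2(β_n − 2) cosh(β_nΔ_n) − 4β_nδ sinh(β_nΔ_n) for every n, and suppose β_n → β* ∈ (0, ∞) and β_nΔ_n → −∞ as n → ∞. Then β* = 2/(1 + 2δ). That is, along the line of continuous transitions the critical inverse temperature tends to 2/(1+2δ) as Δ → −∞. -/
open Filter Topology

/-- Along the line of continuous transitions of the Blume-Capel model with bimodal random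
crystal field (`p = 1/2 − δ`, `0 ≤ δ ≤ 1/2`), the critical inverse temperature tends to
`2/(1+2δ)` as `βΔ → −∞`: if `(βₙ, Δₙ)` satisfy the transition equation with `βₙ → β* ∈ (0,∞)`
and `βₙΔₙ → −∞`, then `β* = 2/(1+2δ)`. -/
theorem critical_beta_limit (δ : ℝ) (hδ0 : 0 ≤ δ) (hδ1 : δ ≤ 1 / 2)
    (βn Δn : ℕ → ℝ) (hpos : ∀ n, 0 < βn n)
    (heq : ∀ n, 5 - 4 * βn n =
      2 * (βn n - 2) * Real.cosh (βn n * Δn n) - 4 * βn n * δ * Real.sinh (βn n * Δn n))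
    (βstar : ℝ) (hβstar : 0 < βstar)
    (hβlim : Filter.Tendsto βn atTop (𝓝 βstar))
    (hbd : Filter.Tendsto (fun n => βn n * Δn n) atTop atBot) :
    βstar = 2 / (1 + 2 * δ) := by
  have hex : Tendsto (fun n => Real.exp (βn n * Δn n)) atTop (𝓝 0) :=
    Real.tendsto_exp_atBot.comp hbd
  have key : ∀ n, βn n - 2 + 2 * βn n * δ =
      Real.exp (βn n * Δn n) * (5 - 4 * βn n) -
        Real.exp (βn n * Δn n) * Real.exp (βn n * Δn n) * (βn n - 2 - 2 * βn n * δ) := by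
    intro n
    have h := heq n
    rw [Real.cosh_eq, Real.sinh_eq] at h
    have he : Real.exp (-(βn n * Δn n)) = (Real.exp (βn n * Δn n))⁻¹ := Real.exp_neg _
    have hne : Real.exp (βn n * Δn n) ≠ 0 := (Real.exp_pos _).ne'
    rw [he] at h
    field_simp at h
    nlinarith [h]
  have hlim1 : Tendsto (fun n => βn n - 2 + 2 * βn n * δ) atTop
      (𝓝 (βstar - 2 + 2 * βstar * δ)) := by
    have : Continuous (fun b : ℝ => b - 2 + 2 * b * δ) := by continuity
    exact (this.tendsto βstar).comp hβlim
  have hlim2 : Tendsto (fun n => Real.exp (βn n * Δn n) * (5 - 4 * βn n) -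
      Real.exp (βn n * Δn n) * Real.exp (βn n * Δn n) * (βn n - 2 - 2 * βn n * δ)) atTop
      (𝓝 0) := by
    have t1 : Tendsto (fun n => (5 : ℝ) - 4 * βn n) atTop (𝓝 (5 - 4 * βstar)) := by
      have : Continuous (fun b : ℝ => 5 - 4 * b) := by continuity
      exact (this.tendsto βstar).comp hβlim
    have t2 : Tendsto (fun n => βn n - 2 - 2 * βn n * δ) atTop (𝓝 (βstar - 2 - 2 * βstar * δ)) := by
      have : Continuous (fun b : ℝ => b - 2 - 2 * b * δ) := by continuity
      exact (this.tendsto βstar).comp hβlim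
    have := (hex.mul t1).sub ((hex.mul hex).mul t2)
    simpa using this
  have hzero : βstar - 2 + 2 * βstar * δ = 0 := by
    refine tendsto_nhds_unique hlim1 ?_
    have : (fun n => βn n - 2 + 2 * βn n * δ) =
        (fun n => Real.exp (βn n * Δn n) * (5 - 4 * βn n) -
          Real.exp (βn n * Δn n) * Real.exp (βn n * Δn n) * (βn n - 2 - 2 * βn n * δ)) :=
      funext key
    rw [this]; exact hlim2
  have hne : 1 + 2 * δ ≠ 0 := by positivity
  field_simp
  linarith
end
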